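/- If E : Fin p → Fin q → ℕ is a constant-diagonal (Toeplitz) matrix, i.e., E(i,j) depends only on j − i, then E is 4-cycle free if and only if the underlying sequence a (with E(i,j) = a_{j−i+p}) is a good sequence for (p,q). -/

import Mathlib

/-!
The entry of a Toeplitz matrix at `(i, j)` is `a (j + p - i)`, so the four corners of the rectangle
`i₁ < i₂`, `j₁ < j₂` read off `a` at `n₁ = j₁ + p - i₂ < n₂ = j₁ + p - i₁ < n₃ = j₂ + p - i₁` and at
`n₄ = j₂ + p - i₂ = n₁ + (n₃ - n₂)`. Every triple allowed in a good sequence arises this way, from the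
rectangle with `i₂ - i₁ = n₂ - n₁`, `j₂ - j₁ = n₃ - n₂` and `(i₁, j₁) = (p - n₂, n₂ - p)` in truncated
subtraction, so that `j₁ + p - i₁ = n₂`.
-/

namespace Toeplitz

variable {p q : ℕ}

theorem good_triple_of_rectangle {i₁ i₂ : Fin p} {j₁ j₂ : Fin q} (hi : i₁ < i₂) (hj : j₁ < j₂) :
    1 ≤ (j₁ + p - i₂ : ℕ) ∧ (j₁ + p - i₂ : ℕ) < j₁ + p - i₁ ∧ (j₁ + p - i₁ : ℕ) < j₂ + p - i₁ ∧
      (j₂ + p - i₁ : ℕ) ≤ p + q - 1 ∧ (j₁ + p - i₁ : ℕ) - (j₁ + p - i₂) < p ∧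
      (j₂ + p - i₁ : ℕ) - (j₁ + p - i₁) < q := by
  have := i₂.isLt
  have := j₂.isLt
  rw [Fin.lt_def] at hi hj
  omega

theorem exists_rectangle_of_good_triple {n₁ n₂ n₃ : ℕ} (h₁ : 1 ≤ n₁) (h₁₂ : n₁ < n₂)
    (h₂₃ : n₂ < n₃) (h₃ : n₃ ≤ p + q - 1) (hp : n₂ - n₁ < p) (hq : n₃ - n₂ < q) :
    ∃ (i₁ i₂ : Fin p) (j₁ j₂ : Fin q), i₁ < i₂ ∧ j₁ < j₂ ∧
      (j₁ + p - i₂ : ℕ) = n₁ ∧ (j₁ + p - i₁ : ℕ) = n₂ ∧ (j₂ + p - i₁ : ℕ) = n₃ :=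
  ⟨⟨p - n₂, by omega⟩, ⟨p - n₂ + (n₂ - n₁), by omega⟩,
    ⟨n₂ - p, by omega⟩, ⟨n₂ - p + (n₃ - n₂), by omega⟩,
    Fin.mk_lt_mk.2 (by omega), Fin.mk_lt_mk.2 (by omega), by simp only; omega,
    by simp only; omega, by simp only; omega⟩

theorem forall_rectangle_iff_forall_good_triple (P : ℕ → ℕ → ℕ → Prop) :
    (∀ i₁ i₂ : Fin p, ∀ j₁ j₂ : Fin q, i₁ < i₂ → j₁ < j₂ →
      P (j₁ + p - i₂) (j₁ + p - i₁) (j₂ + p - i₁)) ↔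
    (∀ n₁ n₂ n₃ : ℕ, 1 ≤ n₁ → n₁ < n₂ → n₂ < n₃ → n₃ ≤ p + q - 1 →
      n₂ - n₁ < p → n₃ - n₂ < q → P n₁ n₂ n₃) := by
  constructor
  · intro h n₁ n₂ n₃ h₁ h₁₂ h₂₃ h₃ hp hq
    obtain ⟨i₁, i₂, j₁, j₂, hi, hj, rfl, rfl, rfl⟩ :=
      exists_rectangle_of_good_triple h₁ h₁₂ h₂₃ h₃ hp hq
    exact h i₁ i₂ j₁ j₂ hi hj
  · intro h i₁ i₂ j₁ j₂ hi hj
    obtain ⟨h₁, h₁₂, h₂₃, h₃, hp, hq⟩ := good_triple_of_rectangle hi hj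
    exact h _ _ _ h₁ h₁₂ h₂₃ h₃ hp hq

theorem fourth_corner (i₁ i₂ : Fin p) {j₁ j₂ : Fin q} (hj : j₁ < j₂) :
    (j₂ + p - i₂ : ℕ) = (j₁ + p - i₂) + ((j₂ + p - i₁) - (j₁ + p - i₁)) := by
  have := i₁.isLt
  have := i₂.isLt
  rw [Fin.lt_def] at hj
  omega

end Toeplitz

open Toeplitz in
theorem toeplitz_4cycle_free_iff_good_general (p q : ℕ)
    (a : ℕ → ℕ) (E : Fin p → Fin q → ℕ)
    (hE : ∀ (i : Fin p) (j : Fin q), E i j = a (j.val + p - i.val)) :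
    (∀ i₁ i₂ : Fin p, ∀ j₁ j₂ : Fin q, i₁ < i₂ → j₁ < j₂ →
      (E i₂ j₁ : ℤ) - E i₁ j₁ ≠ (E i₁ j₂ : ℤ) - E i₂ j₂) ↔
    (∀ n₁ n₂ n₃ : ℕ, 1 ≤ n₁ → n₁ < n₂ → n₂ < n₃ → n₃ ≤ p + q - 1 →
      n₂ - n₁ < p → n₃ - n₂ < q →
      (a (n₁ + (n₃ - n₂)) : ℤ) - a n₃ ≠ (a n₂ : ℤ) - a n₁) := by
  rw [← forall_rectangle_iff_forall_good_triple]
  refine forall₄_congr fun i₁ i₂ j₁ j₂ => forall_congr' fun hi => forall_congr' fun hj => ?_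
  rw [hE, hE, hE, hE, fourth_corner i₁ i₂ hj]
  constructor <;> intro h heq <;> exact h (by linarith)

theorem toeplitz_4cycle_free_iff_good (p q : ℕ) (hp : 0 < p) (hpq : p < q)
    (a : ℕ → ℕ) (E : Fin p → Fin q → ℕ)
    (hE : ∀ (i : Fin p) (j : Fin q), E i j = a (j.val + p - i.val)) :
    (∀ i₁ i₂ : Fin p, ∀ j₁ j₂ : Fin q, i₁ < i₂ → j₁ < j₂ →
      (E i₂ j₁ : ℤ) - E i₁ j₁ ≠ (E i₁ j₂ : ℤ) - E i₂ j₂) ↔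
    (∀ n₁ n₂ n₃ : ℕ, 1 ≤ n₁ → n₁ < n₂ → n₂ < n₃ → n₃ ≤ p + q - 1 →
      n₂ - n₁ < p → n₃ - n₂ < q →
      (a (n₁ + (n₃ - n₂)) : ℤ) - a n₃ ≠ (a n₂ : ℤ) - a n₁) :=
  toeplitz_4cycle_free_iff_good_general p q a E hE
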